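/- arXiv:2506.12218 — 2 statements merged into one kernel-verified Lean document; each statement's English description precedes it below -/
import Mathlib

section
/- (Proposition 2, uniqueness of causal GSOs) Let N ≥ 1 and let A and A' be two N×N real strictly lower triangular matrices. Build for each of them the weighted transitive closure (W = (I − A)⁻¹, W' = (I − A')⁻¹), the diagonal matrices D_k and D'_k ((D_k) i i = 1 iff W k i ≠ 0, and analogously for D'_k from W'), and the causal graph-shift operators S_k = W · D_k · W⁻¹ and S'_k = W' · D'_k · W'⁻¹. If S_k = S'_k for every node k, then A = A'. In other words, distinct DAGs (with the same node ordering) yield distinct sets of causal GSOs. -/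
/-!
Put `M = W'⁻¹ * W = (1 - A') * W`. Equality of the causal GSOs says `M * D k = D' k * M` for
every `k`; reading this at the entry `(i, k)` with `k < i` gives `M i k * 1 = 0 * M i k`, because
`W k k = 1` while `W' k i = 0` by triangularity. So `M` is upper triangular; being also a product
of lower unitriangular matrices, it is the identity, whence `W = W'` and `A = A'`.
-/

open Matrix

namespace Matrix

variable {n R : Type*}

theorem inv_mul_mul_eq_mul_inv_mul [Fintype n] [DecidableEq n] [CommRing R]
    {W W' D D' : Matrix n n R} (hW : IsUnit W.det) (hW' : IsUnit W'.det)
    (h : W * D * W⁻¹ = W' * D' * W'⁻¹) : W'⁻¹ * W * D = D' * (W'⁻¹ * W) := by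
  calc W'⁻¹ * W * D = W'⁻¹ * (W * D * W⁻¹) * W := by
        simp only [Matrix.mul_assoc, nonsing_inv_mul _ hW, Matrix.mul_one]
    _ = W'⁻¹ * (W' * D' * W'⁻¹) * W := by rw [h]
    _ = D' * (W'⁻¹ * W) := by
        simp only [← Matrix.mul_assoc, nonsing_inv_mul _ hW', Matrix.one_mul]

variable [LinearOrder n]

theorem IsLowerTriangular.mul_apply_self [Fintype n] [NonUnitalNonAssocSemiring R]
    {A B : Matrix n n R} (hA : A.IsLowerTriangular) (hB : B.IsLowerTriangular) (i : n) :
    (A * B) i i = A i i * B i i := by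
  rw [mul_apply, Finset.sum_eq_single i (fun j _ hji => ?_) (by simp)]
  rcases hji.lt_or_gt with hj | hj
  · rw [hB hj, mul_zero]
  · rw [hA hj, zero_mul]

variable [DecidableEq n]

theorem eq_one_of_isLowerTriangular_of_isUpperTriangular [Zero R] [One R]
    {M : Matrix n n R} (hl : M.IsLowerTriangular) (hu : M.IsUpperTriangular)
    (hd : ∀ i, M i i = 1) : M = 1 := by
  ext i j
  rcases lt_trichotomy i j with h | rfl | h
  · rw [hl h, one_apply_ne h.ne]
  · rw [hd, one_apply_eq]
  · rw [hu h, one_apply_ne h.ne']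

theorem isUpperTriangular_of_mul_diagonal_eq [Fintype n] [Semiring R]
    {M : Matrix n n R} {d d' : n → n → R}
    (h : ∀ k, M * diagonal (d k) = diagonal (d' k) * M)
    (hd : ∀ k, d k k = 1) (hd' : ∀ k i, k < i → d' k i = 0) :
    M.IsUpperTriangular := by
  intro i k hki
  have hik := congr_fun (congr_fun (h k) i) k
  rwa [mul_diagonal, diagonal_mul, hd, hd' k i hki, mul_one, zero_mul] at hik

section AddGroupWithOne

variable [AddGroupWithOne R] {A : Matrix n n R}

theorem isLowerTriangular_one_sub (hA : ∀ i j, i ≤ j → A i j = 0) :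
    (1 - A).IsLowerTriangular := by
  intro i j (hij : i < j)
  simp [sub_apply, one_apply_ne hij.ne, hA i j hij.le]

theorem one_sub_apply_self (hA : ∀ i j, i ≤ j → A i j = 0) (i : n) : (1 - A) i i = 1 := by
  simp [hA i i le_rfl]

end AddGroupWithOne

variable [Fintype n] [CommRing R] {A : Matrix n n R}

theorem isUnit_det_one_sub (hA : ∀ i j, i ≤ j → A i j = 0) : IsUnit (1 - A).det := by
  simp [det_of_isLowerTriangular _ (isLowerTriangular_one_sub hA), one_sub_apply_self hA]

theorem inv_inv_one_sub (hA : ∀ i j, i ≤ j → A i j = 0) : (1 - A)⁻¹⁻¹ = 1 - A :=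
  nonsing_inv_nonsing_inv _ (isUnit_det_one_sub hA)

theorem isLowerTriangular_inv_one_sub (hA : ∀ i j, i ≤ j → A i j = 0) :
    (1 - A)⁻¹.IsLowerTriangular :=
  have := invertibleOfIsUnitDet _ (isUnit_det_one_sub hA)
  blockTriangular_inv_of_blockTriangular (isLowerTriangular_one_sub hA)

theorem inv_one_sub_apply_self (hA : ∀ i j, i ≤ j → A i j = 0) (i : n) :
    (1 - A)⁻¹ i i = 1 := by
  have h := congr_fun (congr_fun (nonsing_inv_mul _ (isUnit_det_one_sub hA)) i) i
  rwa [(isLowerTriangular_inv_one_sub hA).mul_apply_self (isLowerTriangular_one_sub hA),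
    one_sub_apply_self hA, mul_one, one_apply_eq] at h

end Matrix

theorem causal_gso_uniqueness_general {N : ℕ}
    (A A' : Matrix (Fin N) (Fin N) ℝ)
    (hA : ∀ i j : Fin N, i ≤ j → A i j = 0)
    (hA' : ∀ i j : Fin N, i ≤ j → A' i j = 0)
    (W W' : Matrix (Fin N) (Fin N) ℝ)
    (hW : W = (1 - A)⁻¹) (hW' : W' = (1 - A')⁻¹)
    (D D' : Fin N → Matrix (Fin N) (Fin N) ℝ)
    (hD : ∀ k, D k = Matrix.diagonal (fun i => if W k i ≠ 0 then (1 : ℝ) else 0))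
    (hD' : ∀ k, D' k = Matrix.diagonal (fun i => if W' k i ≠ 0 then (1 : ℝ) else 0))
    (S S' : Fin N → Matrix (Fin N) (Fin N) ℝ)
    (hS : ∀ k, S k = W * D k * W⁻¹)
    (hS' : ∀ k, S' k = W' * D' k * W'⁻¹)
    (heq : ∀ k : Fin N, S k = S' k) :
    A = A' := by
  have hdet : IsUnit W.det := hW ▸ isUnit_nonsing_inv_det _ (isUnit_det_one_sub hA)
  have hdet' : IsUnit W'.det := hW' ▸ isUnit_nonsing_inv_det _ (isUnit_det_one_sub hA')
  have hWinv : W⁻¹ = 1 - A := hW ▸ inv_inv_one_sub hA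
  have hWinv' : W'⁻¹ = 1 - A' := hW' ▸ inv_inv_one_sub hA'
  have hintertwine : ∀ k, W'⁻¹ * W * D k = D' k * (W'⁻¹ * W) := fun k =>
    inv_mul_mul_eq_mul_inv_mul hdet hdet' (by rw [← hS, ← hS', heq])
  simp only [hD, hD'] at hintertwine
  have hlower : (W'⁻¹ * W).IsLowerTriangular := by
    rw [hWinv', hW]
    exact (isLowerTriangular_one_sub hA').mul (isLowerTriangular_inv_one_sub hA)
  have hupper : (W'⁻¹ * W).IsUpperTriangular := by
    refine isUpperTriangular_of_mul_diagonal_eq hintertwine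
      (fun k => by simp [hW, inv_one_sub_apply_self hA]) (fun k i hki => ?_)
    simp [hW', isLowerTriangular_inv_one_sub hA' hki]
  have hdiag : ∀ i, (W'⁻¹ * W) i i = 1 := fun i => by
    rw [hWinv', hW, (isLowerTriangular_one_sub hA').mul_apply_self
      (isLowerTriangular_inv_one_sub hA), one_sub_apply_self hA', inv_one_sub_apply_self hA,
      mul_one]
  have hone := eq_one_of_isLowerTriangular_of_isUpperTriangular hlower hupper hdiag
  have : 1 - A' = 1 - A := by rw [← hWinv', ← hWinv, inv_eq_left_inv hone]
  exact (sub_right_injective this).symm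

/-- Proposition 2: If two strictly lower triangular real matrices
`A`, `A'` give rise to the same causal graph-shift operators `S k = S' k` for
every node `k`, then `A = A'`; distinct DAGs yield distinct sets of causal GSOs. -/
theorem causal_gso_uniqueness {N : ℕ} (hN : 1 ≤ N)
    (A A' : Matrix (Fin N) (Fin N) ℝ)
    (hA : ∀ i j : Fin N, i ≤ j → A i j = 0)
    (hA' : ∀ i j : Fin N, i ≤ j → A' i j = 0)
    (W W' : Matrix (Fin N) (Fin N) ℝ)
    (hW : W = (1 - A)⁻¹) (hW' : W' = (1 - A')⁻¹)
    (D D' : Fin N → Matrix (Fin N) (Fin N) ℝ)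
    (hD : ∀ k, D k = Matrix.diagonal (fun i => if W k i ≠ 0 then (1 : ℝ) else 0))
    (hD' : ∀ k, D' k = Matrix.diagonal (fun i => if W' k i ≠ 0 then (1 : ℝ) else 0))
    (S S' : Fin N → Matrix (Fin N) (Fin N) ℝ)
    (hS : ∀ k, S k = W * D k * W⁻¹)
    (hS' : ∀ k, S' k = W' * D' k * W'⁻¹)
    (heq : ∀ k : Fin N, S k = S' k) :
    A = A' :=
  causal_gso_uniqueness_general A A' hA hA' W W' hW hW' D D' hD hD' S S' hS hS' heq
end

section
/- (Theorem 1, part 1) Let N ≥ 1, let A be an N×N real strictly lower triangular matrix with weighted transitive closure W = (I − A)⁻¹, diagonal matrices D_k ((D_k) i i = 1 iff W k i ≠ 0), and causal graph-shift operators S_k = W · D_k · W⁻¹. Let σ be a permutation of Fin N with permutation matrix P, and define the permuted objects A' = P A Pᵀ, W' = (I − A')⁻¹, D'_q ((D'_q) i i = 1 iff W' q i ≠ 0), and S'_q = W' · D'_q · W'⁻¹. Then for every node k, the permuted causal GSO satisfies S'_{σ(k)} = P · S_k · Pᵀ. -/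
open Matrix BigOperators

/-! Relabeling the nodes by `σ` acts on every matrix by the reindexing `M ↦ M.submatrix σ⁻¹ σ⁻¹`,
which is a ring isomorphism and therefore commutes with `1 - ·` and with (nonsingular) inversion;
so `W' = W.submatrix σ⁻¹ σ⁻¹`. The support pattern of row `σ k` of `W'` is that of row `k` of `W`,
relabeled, hence `D'_{σ k}` and then `S'_{σ k}` are the reindexed `D_k` and `S_k`. -/

namespace Matrix

variable {m n R : Type*} [Fintype m] [Fintype n] [DecidableEq m] [DecidableEq n]

theorem permMatrix_mul_mul_transpose_permMatrix [NonAssocSemiring R] (σ : Equiv.Perm n)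
    (M : Matrix n n R) : σ.permMatrix R * M * (σ.permMatrix R)ᵀ = M.submatrix σ σ := by
  rw [Equiv.Perm.permMatrix, PEquiv.toMatrix_toPEquiv_mul, ← PEquiv.toMatrix_symm,
    ← Equiv.toPEquiv_symm, PEquiv.mul_toMatrix_toPEquiv, Equiv.symm_symm,
    submatrix_submatrix, Function.comp_id, Function.id_comp]

variable [CommRing R] [DecidableEq R]

noncomputable def causalGSO (W : Matrix n n R) (k : n) : Matrix n n R :=
  W * diagonal (fun i => if W k i ≠ 0 then 1 else 0) * W⁻¹

theorem causalGSO_submatrix_equiv (W : Matrix n n R) (e : m ≃ n) (k : n) :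
    causalGSO (W.submatrix e e) (e.symm k) = (causalGSO W k).submatrix e e := by
  have hD : diagonal (fun i => if W.submatrix e e (e.symm k) i ≠ 0 then (1 : R) else 0) =
      (diagonal fun i => if W k i ≠ 0 then 1 else 0).submatrix e e := by
    rw [submatrix_diagonal_equiv]
    simp only [submatrix_apply, Equiv.apply_symm_apply, Function.comp_def]
  rw [causalGSO, causalGSO, hD, inv_submatrix_equiv, submatrix_mul_equiv, submatrix_mul_equiv]

end Matrix

theorem permuted_causal_gso_general {N : ℕ}
    (A : Matrix (Fin N) (Fin N) ℝ)
    (W : Matrix (Fin N) (Fin N) ℝ) (hW : W = (1 - A)⁻¹)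
    (D : Fin N → Matrix (Fin N) (Fin N) ℝ)
    (hD : ∀ k, D k = Matrix.diagonal (fun i => if W k i ≠ 0 then (1 : ℝ) else 0))
    (S : Fin N → Matrix (Fin N) (Fin N) ℝ)
    (hS : ∀ k, S k = W * D k * W⁻¹)
    (σ : Equiv.Perm (Fin N))
    (P : Matrix (Fin N) (Fin N) ℝ)
    (hP : ∀ i j : Fin N, P i j = if σ j = i then 1 else 0)
    (A' : Matrix (Fin N) (Fin N) ℝ) (hA'def : A' = P * A * Pᵀ)
    (W' : Matrix (Fin N) (Fin N) ℝ) (hW' : W' = (1 - A')⁻¹)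
    (D' : Fin N → Matrix (Fin N) (Fin N) ℝ)
    (hD' : ∀ q, D' q = Matrix.diagonal (fun i => if W' q i ≠ 0 then (1 : ℝ) else 0))
    (S' : Fin N → Matrix (Fin N) (Fin N) ℝ)
    (hS' : ∀ q, S' q = W' * D' q * W'⁻¹) :
    ∀ k : Fin N, S' (σ k) = P * S k * Pᵀ := by
  intro k
  have hPσ : P = σ⁻¹.permMatrix ℝ := by
    ext i j
    simp [hP, PEquiv.toMatrix_apply, Equiv.eq_symm_apply, eq_comm]
  have hconj (M : Matrix (Fin N) (Fin N) ℝ) : P * M * Pᵀ = M.submatrix σ.symm σ.symm := by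
    rw [hPσ, permMatrix_mul_mul_transpose_permMatrix]
    rfl
  have h1A' : 1 - A' = (1 - A).submatrix σ.symm σ.symm := by
    rw [hA'def, hconj]
    conv_lhs => rw [← submatrix_one_equiv σ.symm]
    rfl
  have hW'W : W' = W.submatrix σ.symm σ.symm := by
    rw [hW', h1A', inv_submatrix_equiv, hW]
  have hS'k : S' (σ k) = causalGSO W' (σ k) := by rw [hS', hD', causalGSO]
  have hSk : S k = causalGSO W k := by rw [hS, hD, causalGSO]
  have hrelabel := causalGSO_submatrix_equiv W σ.symm k
  rw [Equiv.symm_symm] at hrelabel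
  rw [hS'k, hW'W, hrelabel, hconj, hSk]

/-- Theorem 1, part 1: Relabeling the DAG by a permutation `σ`
(with permutation matrix `P`) transforms the causal graph-shift operators as
`S'_{σ(k)} = P * S k * Pᵀ` for every node `k`. -/
theorem permuted_causal_gso {N : ℕ} (hN : 1 ≤ N)
    (A : Matrix (Fin N) (Fin N) ℝ)
    (hA : ∀ i j : Fin N, i ≤ j → A i j = 0)
    (W : Matrix (Fin N) (Fin N) ℝ) (hW : W = (1 - A)⁻¹)
    (D : Fin N → Matrix (Fin N) (Fin N) ℝ)
    (hD : ∀ k, D k = Matrix.diagonal (fun i => if W k i ≠ 0 then (1 : ℝ) else 0))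
    (S : Fin N → Matrix (Fin N) (Fin N) ℝ)
    (hS : ∀ k, S k = W * D k * W⁻¹)
    (σ : Equiv.Perm (Fin N))
    (P : Matrix (Fin N) (Fin N) ℝ)
    (hP : ∀ i j : Fin N, P i j = if σ j = i then 1 else 0)
    (A' : Matrix (Fin N) (Fin N) ℝ) (hA'def : A' = P * A * Pᵀ)
    (W' : Matrix (Fin N) (Fin N) ℝ) (hW' : W' = (1 - A')⁻¹)
    (D' : Fin N → Matrix (Fin N) (Fin N) ℝ)
    (hD' : ∀ q, D' q = Matrix.diagonal (fun i => if W' q i ≠ 0 then (1 : ℝ) else 0))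
    (S' : Fin N → Matrix (Fin N) (Fin N) ℝ)
    (hS' : ∀ q, S' q = W' * D' q * W'⁻¹) :
    ∀ k : Fin N, S' (σ k) = P * S k * Pᵀ :=
  permuted_causal_gso_general A W hW D hD S hS σ P hP A' hA'def W' hW' D' hD' S' hS'
end
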